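/- arXiv:1510.03045 — 9 statements merged into one kernel-verified Lean document; each statement's English description precedes it below -/
import Mathlib

section
/- For every word length n ≥ 1 and alphabet size d ≥ 2, the majority strategy g_maj is an optimal deterministic strategy: for every strategy f : Fin d → Fin n → Fin d, Value(f) ≤ Value(g_maj). -/
open Finset

/-- Similarity: number of positions where two strings agree. -/
def Sim (n d : ℕ) (z x : Fin n → Fin d) : ℕ :=
  (Finset.univ.filter fun j => z j = x j).card

/-- Best approximation of a word `x` by the rows of strategy `g`. -/
def maxSim (n d : ℕ) (g : Fin d → Fin n → Fin d) (x : Fin n → Fin d) : ℕ :=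
  Finset.univ.sup fun y => Sim n d (g y) x

/-- Value (average success probability) of a strategy, assuming Alice's
optimal encoding. -/
def Value (n d : ℕ) (g : Fin d → Fin n → Fin d) : ℚ :=
  (∑ x : Fin n → Fin d, (maxSim n d g x : ℚ)) / (n * d ^ n)

/-- A strategy is optimal if no strategy has a larger value. -/
def IsOptimal (n d : ℕ) (g : Fin d → Fin n → Fin d) : Prop :=
  ∀ f : Fin d → Fin n → Fin d, Value n d f ≤ Value n d g

/-- Property 1: every column of the decoding matrix is injective. -/
def Property1 (n d : ℕ) (g : Fin d → Fin n → Fin d) : Prop :=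
  ∀ j : Fin n, Function.Injective fun y => g y j

/-- Property 2: at most one column of the decoding matrix fails to be injective. -/
def Property2 (n d : ℕ) (g : Fin d → Fin n → Fin d) : Prop :=
  ∀ j₁ j₂ : Fin n, ¬ Function.Injective (fun y => g y j₁) →
    ¬ Function.Injective (fun y => g y j₂) → j₁ = j₂

/-!
Replacing one column `j₀` of the decoding matrix by the identity column never decreases
`∑ x, maxSim n d g x`. Fix the entries of `x` off `j₀`, let `R y` be the agreement of row `y`
with them and `M = max R`. The answer `a = x j₀` then scores `M + 1` if some `y` with
`R y = M` is decoded to `a` in column `j₀`, and `M` otherwise; so the total over `a` is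
`d * M` plus the number of answers hit by maximisers, which is at most the number of
maximisers, with equality for the identity column. Doing this column by column turns any strategy into the majority
strategy.
-/

section ColumnExchange

variable {ι : Type*} [Fintype ι] [DecidableEq ι] (R : ι → ℕ)

lemma sup_ite_add_le_sup_add_sum (c : ι → ι) (a : ι) :
    univ.sup (fun y => (if c y = a then 1 else 0) + R y)
      ≤ univ.sup R + ∑ y with c y = a, if R y = univ.sup R then 1 else 0 := by
  refine Finset.sup_le fun y _ => ?_
  have hRy : R y ≤ univ.sup R := le_sup (mem_univ y)
  by_cases hy : c y = a
  · have : (if R y = univ.sup R then 1 else 0) ≤ ∑ z with c z = a,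
        if R z = univ.sup R then 1 else 0 :=
      single_le_sum (f := fun z => if R z = univ.sup R then 1 else 0) (fun _ _ => Nat.zero_le _)
        (by simpa using hy)
    split_ifs at this ⊢ <;> omega
  · simp only [hy, if_false, zero_add]
    omega

lemma sup_add_ite_le_sup_ite_add (a : ι) :
    univ.sup R + (if R a = univ.sup R then 1 else 0)
      ≤ univ.sup (fun y => (if y = a then 1 else 0) + R y) := by
  have hR : univ.sup R ≤ univ.sup (fun y => (if y = a then 1 else 0) + R y) :=
    Finset.sup_mono_fun fun y _ => Nat.le_add_left _ _
  have ha : 1 + R a ≤ univ.sup (fun y => (if y = a then 1 else 0) + R y) := by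
    simpa using le_sup (f := fun y => (if y = a then 1 else 0) + R y) (mem_univ a)
  split_ifs <;> omega

lemma sum_sup_ite_comp_add_le (c : ι → ι) :
    ∑ a, univ.sup (fun y => (if c y = a then 1 else 0) + R y)
      ≤ ∑ a, univ.sup (fun y => (if y = a then 1 else 0) + R y) :=
  calc ∑ a, univ.sup (fun y => (if c y = a then 1 else 0) + R y)
      ≤ ∑ a, (univ.sup R + ∑ y with c y = a, if R y = univ.sup R then 1 else 0) :=
        sum_le_sum fun a _ => sup_ite_add_le_sup_add_sum R c a
    _ = ∑ a, (univ.sup R + if R a = univ.sup R then 1 else 0) := by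
        rw [sum_add_distrib, sum_add_distrib, sum_fiberwise]
    _ ≤ ∑ a, univ.sup (fun y => (if y = a then 1 else 0) + R y) :=
        sum_le_sum fun a _ => sup_add_ite_le_sup_ite_add R a

end ColumnExchange

section Columns

variable {n d : ℕ}

def simOff (j₀ : Fin n) (z : Fin n → Fin d) (w : {j // j ≠ j₀} → Fin d) : ℕ :=
  ∑ j : {j // j ≠ j₀}, if z j = w j then 1 else 0

lemma sim_eq_ite_add_simOff (j₀ : Fin n) (z x : Fin n → Fin d) :
    Sim n d z x = (if z j₀ = x j₀ then 1 else 0) + simOff j₀ z (fun j => x j) := by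
  rw [Sim, card_filter, Fintype.sum_eq_add_sum_subtype_ne _ j₀, simOff]

lemma sum_maxSim_eq_sum_sum_sup (g : Fin d → Fin n → Fin d) (j₀ : Fin n) :
    ∑ x, maxSim n d g x = ∑ w : {j // j ≠ j₀} → Fin d, ∑ a,
      univ.sup (fun y => (if g y j₀ = a then 1 else 0) + simOff j₀ (g y) w) := by
  rw [← (Equiv.funSplitAt j₀ (Fin d)).symm.sum_comp, Fintype.sum_prod_type, sum_comm]
  refine sum_congr rfl fun w _ => sum_congr rfl fun a _ => sup_congr rfl fun y _ => ?_
  rw [sim_eq_ite_add_simOff j₀]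
  congr 2
  · simp
  · funext j
    simp [j.2]

lemma sum_maxSim_le_update_column (g : Fin d → Fin n → Fin d) (j₀ : Fin n) :
    ∑ x, maxSim n d g x ≤ ∑ x, maxSim n d (fun y => Function.update (g y) j₀ y) x := by
  rw [sum_maxSim_eq_sum_sum_sup g j₀, sum_maxSim_eq_sum_sum_sup _ j₀]
  refine sum_le_sum fun w _ => ?_
  have hoff : ∀ y, simOff j₀ (Function.update (g y) j₀ y) w = simOff j₀ (g y) w := fun y =>
    sum_congr rfl fun j _ => by rw [Function.update_of_ne j.2]
  simp only [Function.update_self, hoff]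
  exact sum_sup_ite_comp_add_le (fun y => simOff j₀ (g y) w) (fun y => g y j₀)

lemma sum_maxSim_le_majority_on (f : Fin d → Fin n → Fin d) (s : Finset (Fin n)) :
    ∑ x, maxSim n d f x ≤ ∑ x, maxSim n d (fun y j => if j ∈ s then y else f y j) x := by
  induction s using Finset.induction_on with
  | empty => simp
  | insert j s _ ih =>
    have hupdate : (fun y => Function.update (fun j' => if j' ∈ s then y else f y j') j y)
        = fun y j' => if j' ∈ insert j s then y else f y j' := by
      funext y j'
      by_cases hj : j' = j
      · simp [hj]
      · simp [hj, Function.update_of_ne]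
    exact ih.trans (hupdate ▸ sum_maxSim_le_update_column _ j)

end Columns

theorem stmt_0_general (n d : ℕ)
    (f : Fin d → Fin n → Fin d) :
    Value n d f ≤ Value n d (fun y _ => y) := by
  unfold Value
  have key := sum_maxSim_le_majority_on f univ
  simp only [mem_univ, if_true] at key
  exact div_le_div_of_nonneg_right (by exact_mod_cast key) (by positivity)

/-- For every `n ≥ 1` and `d ≥ 2`, the majority strategy
`g_maj y j = y` is an optimal deterministic strategy. -/
theorem stmt_0 (n d : ℕ) (hn : 1 ≤ n) (hd : 2 ≤ d)
    (f : Fin d → Fin n → Fin d) :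
    Value n d f ≤ Value n d (fun y _ => y) :=
  stmt_0_general n d f
end

section
/- If n > 2 and either d > 2 or n is odd, then the number of optimal deterministic strategies is exactly (d!)^n, i.e., the set {g : Fin d → Fin n → Fin d | g is optimal} has cardinality (d!)^n. -/
open Finset

/-!
Up to the factor `n * d ^ n`, the value of `g` is its score `∑ x, maxSim n d g x`. Write a word
as its letter `a` in column `j` plus the remaining word `w`. If `M w` is the best agreement of a
row of `g` with `w` outside column `j` and `A w` is the set of rows attaining it, summing over `a`
first gives `score g = ∑ w, (d * M w + #(g · j '' A w))`. So replacing column `j` by an injective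
column never lowers the score, and raises it strictly when two rows of some `A w` share their
entry in column `j`. Hence every strategy with injective columns has the score of the identity
strategy, which bounds every score from above. Conversely, if column `j` of `g` is not injective,
replace all other columns by the identity (the score does not drop): `A w` becomes the set of
most frequent letters of `w`. A word of length `n - 1 ≥ 2` in which the two colliding rows are
both most frequent exists when `n - 1` is even (half and half) or when `d > 2` (split `n - 2`
letters evenly and spend the last one on a third letter).
-/

def score (n d : ℕ) (g : Fin d → Fin n → Fin d) : ℕ :=
  ∑ x : Fin n → Fin d, maxSim n d g x

lemma value_eq (n d : ℕ) (g : Fin d → Fin n → Fin d) :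
    Value n d g = score n d g / (n * d ^ n) := by
  simp [Value, score]

lemma value_le_value_iff {n d : ℕ} (hn : 0 < n) (hd : 0 < d) (f g : Fin d → Fin n → Fin d) :
    Value n d f ≤ Value n d g ↔ score n d f ≤ score n d g := by
  rw [value_eq, value_eq, div_le_div_iff_of_pos_right (by positivity), Nat.cast_le]

section Maximizers

variable {ι α : Type*} [Fintype ι] [DecidableEq α]

def maximizers (t : ι → ℕ) : Finset ι :=
  {y | t y = univ.sup t}

lemma mem_maximizers_of_le {t : ι → ℕ} {y : ι} {k : ℕ} (hle : ∀ z, t z ≤ k) (hy : t y = k) :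
    y ∈ maximizers t := by
  have : univ.sup t = k := le_antisymm (Finset.sup_le fun z _ => hle z) (hy ▸ le_sup (mem_univ y))
  simp [maximizers, hy, this]

lemma sup_add_indicator (t : ι → ℕ) (c : ι → α) (a : α) :
    (univ.sup fun y => t y + if c y = a then 1 else 0) =
      univ.sup t + if a ∈ (maximizers t).image c then 1 else 0 := by
  apply le_antisymm
  · refine Finset.sup_le fun y _ => ?_
    have hy : t y ≤ univ.sup t := le_sup (mem_univ y)
    by_cases hya : c y = a
    · by_cases hmax : t y = univ.sup t
      · have : a ∈ (maximizers t).image c := mem_image.2 ⟨y, by simp [maximizers, hmax], hya⟩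
        simp [hya, this, hmax]
      · simp only [hya, if_true]; split_ifs <;> omega
    · simp only [hya, if_false]; omega
  · split_ifs with ha
    · obtain ⟨y, hy, rfl⟩ := mem_image.1 ha
      simp only [maximizers, mem_filter, mem_univ, true_and] at hy
      rw [← hy]
      simpa using le_sup (f := fun z => t z + if c z = c y then 1 else 0) (mem_univ y)
    · exact add_zero (univ.sup t) ▸ Finset.sup_mono_fun fun y _ => Nat.le_add_right _ _

lemma sum_sup_add_indicator [Fintype α] (t : ι → ℕ) (c : ι → α) :
    ∑ a : α, (univ.sup fun y => t y + if c y = a then 1 else 0) =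
      Fintype.card α * univ.sup t + #((maximizers t).image c) := by
  simp only [sup_add_indicator, sum_add_distrib, sum_const, card_univ, smul_eq_mul, sum_boole,
    filter_mem_eq_inter, univ_inter, Nat.cast_id]

end Maximizers

section ColumnDecomposition

variable {m d : ℕ}

lemma sim_insertNth (j : Fin (m + 1)) (z : Fin (m + 1) → Fin d) (a : Fin d) (w : Fin m → Fin d) :
    Sim (m + 1) d z (Fin.insertNth j a w) =
      (if z j = a then 1 else 0) + Sim m d (Fin.removeNth j z) w := by
  rw [Sim, Sim, card_filter, card_filter, Fin.sum_univ_succAbove _ j]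
  simp only [Fin.insertNth_apply_same, Fin.insertNth_apply_succAbove]
  rfl

def restSim (j : Fin (m + 1)) (g : Fin d → Fin (m + 1) → Fin d) (w : Fin m → Fin d)
    (y : Fin d) : ℕ :=
  Sim m d (Fin.removeNth j (g y)) w

lemma score_eq_sum_restSim (j : Fin (m + 1)) (g : Fin d → Fin (m + 1) → Fin d) :
    score (m + 1) d g = ∑ w : Fin m → Fin d,
      (d * univ.sup (restSim j g w) + #((maximizers (restSim j g w)).image fun y => g y j)) := by
  rw [score, ← (Fin.insertNthEquiv (fun _ => Fin d) j).sum_comp, Fintype.sum_prod_type, sum_comm]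
  refine sum_congr rfl fun w _ => ?_
  change ∑ a, univ.sup (fun y => Sim _ _ (g y) (Fin.insertNth j a w)) = _
  simp only [sim_insertNth, add_comm (ite _ _ _)]
  rw [sum_sup_add_indicator, Fintype.card_fin]
  rfl

end ColumnDecomposition

section ColumnReplacement

variable {n m d : ℕ}

def setCol (g : Fin d → Fin n → Fin d) (j : Fin n) (c : Fin d → Fin d) : Fin d → Fin n → Fin d :=
  fun y => Function.update (g y) j (c y)

lemma restSim_setCol (j : Fin (m + 1)) (g : Fin d → Fin (m + 1) → Fin d) (c : Fin d → Fin d) :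
    restSim j (setCol g j c) = restSim j g := by
  funext w y
  simp [restSim, setCol]

lemma score_setCol (j : Fin (m + 1)) (g : Fin d → Fin (m + 1) → Fin d) {c : Fin d → Fin d}
    (hc : Function.Injective c) :
    score (m + 1) d (setCol g j c) =
      ∑ w : Fin m → Fin d, (d * univ.sup (restSim j g w) + #(maximizers (restSim j g w))) := by
  rw [score_eq_sum_restSim j, restSim_setCol]
  refine sum_congr rfl fun w _ => ?_
  simp only [setCol, Function.update_self]
  rw [card_image_of_injective _ hc]

lemma score_le_score_setCol (j : Fin (m + 1)) (g : Fin d → Fin (m + 1) → Fin d)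
    {c : Fin d → Fin d} (hc : Function.Injective c) :
    score (m + 1) d g ≤ score (m + 1) d (setCol g j c) := by
  rw [score_setCol j g hc, score_eq_sum_restSim j]
  exact sum_le_sum fun w _ => Nat.add_le_add_left card_image_le _

lemma score_lt_score_setCol (j : Fin (m + 1)) (g : Fin d → Fin (m + 1) → Fin d)
    {c : Fin d → Fin d} (hc : Function.Injective c) (w : Fin m → Fin d) {y₁ y₂ : Fin d}
    (hy : y₁ ≠ y₂) (hcol : g y₁ j = g y₂ j) (h₁ : y₁ ∈ maximizers (restSim j g w))
    (h₂ : y₂ ∈ maximizers (restSim j g w)) :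
    score (m + 1) d g < score (m + 1) d (setCol g j c) := by
  rw [score_setCol j g hc, score_eq_sum_restSim j]
  refine sum_lt_sum (fun w _ => Nat.add_le_add_left card_image_le _) ⟨w, mem_univ w, ?_⟩
  refine Nat.add_lt_add_left (card_image_le.lt_of_ne fun h => hy ?_) _
  exact card_image_iff.1 h h₁ h₂ hcol

lemma setCol_setCol_self (g : Fin d → Fin n → Fin d) (j : Fin n) (c : Fin d → Fin d) :
    setCol (setCol g j c) j (fun y => g y j) = g := by
  funext y k
  by_cases hk : k = j <;> simp [setCol, Function.update_apply, hk]

lemma score_setCol_eq (j : Fin (m + 1)) {g : Fin d → Fin (m + 1) → Fin d}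
    (hg : Function.Injective fun y => g y j) {c : Fin d → Fin d} (hc : Function.Injective c) :
    score (m + 1) d (setCol g j c) = score (m + 1) d g := by
  refine le_antisymm ?_ (score_le_score_setCol j g hc)
  conv_rhs => rw [← setCol_setCol_self g j c]
  exact score_le_score_setCol j _ hg

def idCols (S : Finset (Fin n)) (g : Fin d → Fin n → Fin d) : Fin d → Fin n → Fin d :=
  fun y k => if k ∈ S then y else g y k

@[simp]
lemma idCols_empty (g : Fin d → Fin n → Fin d) : idCols ∅ g = g := by
  funext y k
  simp [idCols]

lemma idCols_insert (k : Fin n) (S : Finset (Fin n)) (g : Fin d → Fin n → Fin d) :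
    idCols (insert k S) g = setCol (idCols S g) k id := by
  funext y i
  by_cases hi : i = k <;> simp [idCols, setCol, hi]

lemma score_le_score_idCols (S : Finset (Fin (m + 1))) (g : Fin d → Fin (m + 1) → Fin d) :
    score (m + 1) d g ≤ score (m + 1) d (idCols S g) := by
  induction S using Finset.induction_on with
  | empty => simp
  | insert k S _ ih =>
    rw [idCols_insert]
    exact ih.trans (score_le_score_setCol k _ Function.injective_id)

lemma score_idCols_of_property1 (S : Finset (Fin (m + 1))) {g : Fin d → Fin (m + 1) → Fin d}
    (hg : Property1 (m + 1) d g) : score (m + 1) d (idCols S g) = score (m + 1) d g := by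
  induction S using Finset.induction_on with
  | empty => simp
  | insert k S hk ih =>
    have hcol : (fun y => idCols S g y k) = fun y => g y k := by simp [idCols, hk]
    rw [idCols_insert, score_setCol_eq k (hcol ▸ hg k) Function.injective_id, ih]

end ColumnReplacement

lemma exists_two_most_frequent {α : Type*} [Fintype α] [DecidableEq α] {a b c : α}
    (hab : a ≠ b) {k l : ℕ} (hl : l ≤ k) (hc : l = 0 ∨ c ≠ a ∧ c ≠ b) :
    ∃ w : Fin (k + k + l) → α,
      a ∈ maximizers (fun y => #{i | y = w i}) ∧ b ∈ maximizers (fun y => #{i | y = w i}) := by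
  set w : Fin (k + k + l) → α :=
    Fin.append (Fin.append (fun _ => a) (fun _ => b)) (fun _ => c)
  have hcount : ∀ y, #{i | y = w i} =
      (if y = a then k else 0) + (if y = b then k else 0) + (if y = c then l else 0) := by
    intro y
    rw [card_filter, Fin.sum_univ_add, Fin.sum_univ_add]
    simp only [w, Fin.append_left, Fin.append_right]
    simp
  have hle : ∀ y, #{i | y = w i} ≤ k := fun y => by
    rw [hcount]; split_ifs <;> grind
  refine ⟨w, mem_maximizers_of_le hle ?_, mem_maximizers_of_le hle ?_⟩ <;>
    rw [hcount] <;> split_ifs <;> grind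

section Optimality

variable {m d : ℕ}

lemma exists_two_most_frequent_sim (hm : 2 ≤ m) (h : 2 < d ∨ Odd (m + 1)) {a b : Fin d}
    (hab : a ≠ b) : ∃ w : Fin m → Fin d,
      a ∈ maximizers (fun y => Sim m d (fun _ => y) w) ∧
        b ∈ maximizers (fun y => Sim m d (fun _ => y) w) := by
  rcases Nat.even_or_odd m with ⟨k, rfl⟩ | hodd
  · exact exists_two_most_frequent (c := a) (l := 0) hab (Nat.zero_le k) (.inl rfl)
  · have hd : 2 < d := h.resolve_right (by simpa [Nat.odd_add_one] using hodd)
    obtain ⟨c, -, hc⟩ := exists_mem_notMem_of_card_lt_card (s := {a, b}) (t := univ)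
      (by simpa using (card_le_two (a := a) (b := b)).trans_lt hd)
    obtain ⟨k, rfl⟩ : ∃ k, m = k + k + 1 := ⟨m / 2, by obtain ⟨r, hr⟩ := hodd; omega⟩
    simp only [mem_insert, mem_singleton, not_or] at hc
    exact exists_two_most_frequent hab (by omega) (.inr hc)

lemma restSim_idCols_erase (j : Fin (m + 1)) (g : Fin d → Fin (m + 1) → Fin d) :
    restSim j (idCols (univ.erase j) g) = fun w y => Sim m d (fun _ => y) w := by
  funext w y
  have : Fin.removeNth j (idCols (univ.erase j) g y) = fun _ => y := by
    funext i
    simp [Fin.removeNth, idCols, Fin.succAbove_ne]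
  rw [restSim, this]

lemma property1_of_forall_score_le (hm : 2 ≤ m) (h : 2 < d ∨ Odd (m + 1))
    {g : Fin d → Fin (m + 1) → Fin d} (hg : ∀ f, score (m + 1) d f ≤ score (m + 1) d g) :
    Property1 (m + 1) d g := by
  intro j y₁ y₂ hcol
  by_contra hne
  obtain ⟨w, h₁, h₂⟩ := exists_two_most_frequent_sim hm h hne
  let g' := idCols (univ.erase j) g
  have hcol' : g' y₁ j = g' y₂ j := by simpa [g', idCols] using hcol
  rw [← congrFun (restSim_idCols_erase j g) w] at h₁ h₂
  have hlt := score_lt_score_setCol j g' Function.injective_id w hne hcol' h₁ h₂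
  exact (hg _).not_gt ((score_le_score_idCols _ g).trans_lt hlt)

lemma idCols_univ {n : ℕ} (g : Fin d → Fin n → Fin d) : idCols univ g = fun y _ => y := by
  funext y k
  simp [idCols]

lemma isOptimal_iff_property1 {n : ℕ} (hn : 2 < n) (hd : 2 ≤ d) (h : 2 < d ∨ Odd n)
    (g : Fin d → Fin n → Fin d) : IsOptimal n d g ↔ Property1 n d g := by
  obtain ⟨m, rfl⟩ : ∃ m, n = m + 1 := ⟨n - 1, by omega⟩
  simp only [IsOptimal, value_le_value_iff (Nat.succ_pos m) (by omega : 0 < d)]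
  refine ⟨property1_of_forall_score_le (by omega) h, fun hg f => ?_⟩
  calc score (m + 1) d f ≤ score (m + 1) d (idCols univ f) := score_le_score_idCols univ f
    _ = score (m + 1) d (idCols univ g) := by rw [idCols_univ, idCols_univ]
    _ = score (m + 1) d g := score_idCols_of_property1 univ hg

end Optimality

lemma ncard_setOf_property1 (n d : ℕ) : {g | Property1 n d g}.ncard = d.factorial ^ n := by
  let e : {g // Property1 n d g} ≃ (Fin n → Fin d ↪ Fin d) :=
    { toFun := fun g j => ⟨fun y => g.1 y j, g.2 j⟩
      invFun := fun e => ⟨fun y j => e j y, fun j => (e j).injective⟩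
      left_inv := fun _ => rfl
      right_inv := fun _ => rfl }
  rw [← Nat.card_coe_set_eq, Set.coe_ofPred, Nat.card_congr e, Nat.card_eq_fintype_card,
    Fintype.card_fun, Fintype.card_embedding_eq]
  simp only [Fintype.card_fin, Nat.descFactorial_self]

/-- If `n > 2` and either `d > 2` or `n` is odd, the number of
optimal deterministic strategies is exactly `(d!)^n`. -/
theorem stmt_1 (n d : ℕ) (hn : 2 < n) (hd : 2 ≤ d) (h : 2 < d ∨ Odd n) :
    {g : Fin d → Fin n → Fin d | IsOptimal n d g}.ncard = d.factorial ^ n := by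
  have hset : {g | IsOptimal n d g} = {g | Property1 n d g} :=
    Set.ext fun g => isOptimal_iff_property1 hn hd h g
  rw [hset, ncard_setOf_property1]
end

section
/- Let f be a strategy, j : Fin n an index, and a, b : Fin d letters such that (i) there is no y₀ with f y₀ j = a, and (ii) there exist y₁ ≠ y₂ with f y₁ j = f y₂ j = b. Let g be the strategy obtained from f by changing the single entry f y₁ j from b to a (all other entries unchanged). Then Value(g) ≥ Value(f). -/
open Finset

/-!
Let `τ` swap the letters `a` and `b` in position `j` of a word. It is an involution, so it
suffices to compare `f` and `g` on each pair `{x, τ x}`; the only nontrivial pairs are those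
with `x j = a`.
Since no row of `f` has `a` in column `j`, each row of `f` matches `x` at most as well as the
same row of `g` matches `x` or `τ x`. Each row of `f` matches `τ x` at most as well as the same
row of `g` matches `τ x`, except row `y₁`, whose match `b` at `j` is regained by `g y₁` against
`x`. So the `f`-score of `x` is at most the smaller, and that of `τ x` at most the larger, of
the two `g`-scores.
-/

def replaceEntry {n d : ℕ} (f : Fin d → Fin n → Fin d) (y₀ : Fin d) (j : Fin n) (a : Fin d) :
    Fin d → Fin n → Fin d :=
  fun y j' => if y = y₀ ∧ j' = j then a else f y j'

def swapAt {ι α : Type*} [DecidableEq ι] [DecidableEq α] (j : ι) (a b : α) (x : ι → α) : ι → α :=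
  Function.update x j (Equiv.swap a b (x j))

section SwapAt

variable {ι α : Type*} [DecidableEq ι] [DecidableEq α] (j : ι) (a b : α)

@[simp]
lemma swapAt_apply_self (x : ι → α) : swapAt j a b x j = Equiv.swap a b (x j) := by
  simp [swapAt]

lemma swapAt_apply_of_ne (x : ι → α) {i : ι} (hi : i ≠ j) : swapAt j a b x i = x i := by
  simp [swapAt, hi]

lemma swapAt_involutive : Function.Involutive (swapAt j a b) := by
  intro x
  ext i
  rcases eq_or_ne i j with rfl | hi
  · simp
  · simp [swapAt_apply_of_ne _ _ _ _ hi]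

lemma swapAt_eq_self {x : ι → α} (ha : x j ≠ a) (hb : x j ≠ b) : swapAt j a b x = x := by
  simp [swapAt, Equiv.swap_apply_of_ne_of_ne ha hb]

end SwapAt

lemma Finset.sum_le_sum_of_involutive {α M : Type*} [Fintype α] [AddCommMonoid M] [LinearOrder M]
    [IsOrderedCancelAddMonoid M] {F G : α → M} {τ : α → α} (hτ : Function.Involutive τ)
    (h : ∀ x, F x + F (τ x) ≤ G x + G (τ x)) : ∑ x, F x ≤ ∑ x, G x := by
  have hsum : ∑ x, (F x + F (τ x)) ≤ ∑ x, (G x + G (τ x)) := Finset.sum_le_sum fun x _ => h x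
  have hF : ∑ x, F (τ x) = ∑ x, F x := Equiv.sum_comp hτ.toPerm F
  have hG : ∑ x, G (τ x) = ∑ x, G x := Equiv.sum_comp hτ.toPerm G
  rw [sum_add_distrib, sum_add_distrib, hF, hG, ← two_nsmul, ← two_nsmul] at hsum
  exact (nsmul_le_nsmul_iff_right two_ne_zero).mp hsum

section Strategies

variable {n d : ℕ}

lemma Sim_le_Sim {z z' x x' : Fin n → Fin d} (h : ∀ i, z i = x i → z' i = x' i) :
    Sim n d z x ≤ Sim n d z' x' :=
  card_le_card fun i hi => by simp_all

lemma Sim_le_maxSim (g : Fin d → Fin n → Fin d) (x : Fin n → Fin d) (y : Fin d) :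
    Sim n d (g y) x ≤ maxSim n d g x :=
  le_sup (f := fun y => Sim n d (g y) x) (mem_univ y)

lemma maxSim_le_iff {g : Fin d → Fin n → Fin d} {x : Fin n → Fin d} {m : ℕ} :
    maxSim n d g x ≤ m ↔ ∀ y, Sim n d (g y) x ≤ m := by
  simp [maxSim]

lemma Value_le_Value {f g : Fin d → Fin n → Fin d}
    (h : ∑ x, maxSim n d f x ≤ ∑ x, maxSim n d g x) : Value n d f ≤ Value n d g :=
  div_le_div_of_nonneg_right (by exact_mod_cast h) (by positivity)

variable {f : Fin d → Fin n → Fin d} {y₀ : Fin d} {j : Fin n} {a b : Fin d}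

lemma replaceEntry_apply_of_ne {y : Fin d} {i : Fin n} (h : ¬(y = y₀ ∧ i = j)) :
    replaceEntry f y₀ j a y i = f y i :=
  if_neg h

lemma maxSim_le_maxSim_replaceEntry {x : Fin n → Fin d} (hx : x j ≠ f y₀ j) :
    maxSim n d f x ≤ maxSim n d (replaceEntry f y₀ j a) x := by
  refine maxSim_le_iff.mpr fun y => (Sim_le_Sim fun i hi => ?_).trans (Sim_le_maxSim _ x y)
  rw [replaceEntry_apply_of_ne, hi]
  rintro ⟨rfl, rfl⟩
  exact hx hi.symm

lemma maxSim_le_maxSim_replaceEntry_of_agree_off {x x' : Fin n → Fin d}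
    (hx : ∀ y, f y j ≠ x j) (hx' : ∀ i ≠ j, x' i = x i) :
    maxSim n d f x ≤ maxSim n d (replaceEntry f y₀ j a) x' := by
  refine maxSim_le_iff.mpr fun y => (Sim_le_Sim fun i hi => ?_).trans (Sim_le_maxSim _ x' y)
  have hij : i ≠ j := by rintro rfl; exact hx y hi
  rw [replaceEntry_apply_of_ne (by tauto), hx' i hij, hi]

lemma maxSim_swapAt_le_max {x : Fin n → Fin d} (hx : x j = a) (hb : f y₀ j = b) :
    maxSim n d f (swapAt j a b x) ≤
      max (maxSim n d (replaceEntry f y₀ j a) x)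
        (maxSim n d (replaceEntry f y₀ j a) (swapAt j a b x)) := by
  refine maxSim_le_iff.mpr fun y => ?_
  by_cases hy : y = y₀
  · subst hy
    refine le_max_of_le_left ((Sim_le_Sim fun i hi => ?_).trans (Sim_le_maxSim _ x y))
    rcases eq_or_ne i j with rfl | hij
    · simp [replaceEntry, hx]
    · rwa [replaceEntry_apply_of_ne (by tauto), ← swapAt_apply_of_ne j a b x hij]
  · refine le_max_of_le_right ((Sim_le_Sim fun i hi => ?_).trans (Sim_le_maxSim _ _ y))
    rwa [replaceEntry_apply_of_ne (by tauto)]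

lemma maxSim_add_maxSim_swapAt_le_of_eq {x : Fin n → Fin d} (ha : ∀ y, f y j ≠ a)
    (hb : f y₀ j = b) (hx : x j = a) :
    maxSim n d f x + maxSim n d f (swapAt j a b x) ≤
      maxSim n d (replaceEntry f y₀ j a) x +
        maxSim n d (replaceEntry f y₀ j a) (swapAt j a b x) := by
  have hfx : ∀ y, f y j ≠ x j := hx ▸ ha
  have h₁ : maxSim n d f x ≤ maxSim n d (replaceEntry f y₀ j a) x :=
    maxSim_le_maxSim_replaceEntry_of_agree_off hfx fun _ _ => rfl
  have h₂ : maxSim n d f x ≤ maxSim n d (replaceEntry f y₀ j a) (swapAt j a b x) :=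
    maxSim_le_maxSim_replaceEntry_of_agree_off hfx fun i hi => swapAt_apply_of_ne j a b x hi
  have h₃ := maxSim_swapAt_le_max (f := f) hx hb
  omega

lemma maxSim_add_maxSim_swapAt_le (ha : ∀ y, f y j ≠ a) (hb : f y₀ j = b)
    (x : Fin n → Fin d) :
    maxSim n d f x + maxSim n d f (swapAt j a b x) ≤
      maxSim n d (replaceEntry f y₀ j a) x +
        maxSim n d (replaceEntry f y₀ j a) (swapAt j a b x) := by
  by_cases hxa : x j = a
  · exact maxSim_add_maxSim_swapAt_le_of_eq ha hb hxa
  by_cases hxb : x j = b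
  · have hτx : swapAt j a b x j = a := by simp [hxb]
    have := maxSim_add_maxSim_swapAt_le_of_eq ha hb hτx
    rw [swapAt_involutive j a b x] at this
    omega
  · rw [swapAt_eq_self j a b hxa hxb]
    have := maxSim_le_maxSim_replaceEntry (a := a) (hb ▸ hxb : x j ≠ f y₀ j)
    omega

lemma Value_le_Value_replaceEntry (ha : ∀ y, f y j ≠ a) (hb : f y₀ j = b) :
    Value n d f ≤ Value n d (replaceEntry f y₀ j a) :=
  Value_le_Value <| Finset.sum_le_sum_of_involutive (swapAt_involutive j a b)
    (maxSim_add_maxSim_swapAt_le ha hb)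

end Strategies

theorem stmt_3_general (n d : ℕ)
    (f : Fin d → Fin n → Fin d) (j : Fin n) (a b : Fin d)
    (ha : ∀ y₀ : Fin d, f y₀ j ≠ a)
    (y₁ : Fin d) (hb₁ : f y₁ j = b)
    (g : Fin d → Fin n → Fin d)
    (hg : g = fun y j' => if y = y₁ ∧ j' = j then a else f y j') :
    Value n d f ≤ Value n d g := by
  subst hg
  exact Value_le_Value_replaceEntry ha hb₁

/-- Lemma 1: if letter `a` is missing from column `j` of `f` and
letter `b` appears at least twice there, then changing the single entry
`f y₁ j` from `b` to `a` does not decrease the value. -/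
theorem stmt_3 (n d : ℕ) (hn : 1 ≤ n) (hd : 2 ≤ d)
    (f : Fin d → Fin n → Fin d) (j : Fin n) (a b : Fin d)
    (ha : ∀ y₀ : Fin d, f y₀ j ≠ a)
    (y₁ y₂ : Fin d) (hy : y₁ ≠ y₂) (hb₁ : f y₁ j = b) (hb₂ : f y₂ j = b)
    (g : Fin d → Fin n → Fin d)
    (hg : g = fun y j' => if y = y₁ ∧ j' = j then a else f y j') :
    Value n d f ≤ Value n d g :=
  stmt_3_general n d f j a b ha y₁ hb₁ g hg
end

section
/- For every strategy f there exists a strategy g satisfying Property 1 (for every index j : Fin n the map y ↦ g y j is injective) such that Value(g) ≥ Value(f). -/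
/-! Replacing one column `y ↦ f y j` of a strategy by the identity column `y ↦ y` never lowers
`∑ x, maxSim f x`. Fix all letters of `x` except `a := x j`, let `S y` count the agreements of
row `y` with `x` away from `j`, `M := max S` and `T := {y | S y = M}`. With column `c`, the word
scores at most `M + [a ∈ c '' T]`, so the sum over `a` is at most `d * M + #(c '' T)`, while
the identity column scores exactly `M + [a ∈ T]`, summing to `d * M + #T`. Replacing the
columns one at a time, the repetition strategy `fun y _ => y`, whose columns are injective,
dominates every strategy. -/

open Finset

lemma sum_sup_ite_le_sum_sup_ite {α : Type*} [Fintype α] [DecidableEq α] (c : α → α)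
    (S : α → ℕ) :
    ∑ a, univ.sup (fun y => (if c y = a then 1 else 0) + S y)
      ≤ ∑ a, univ.sup (fun y => (if y = a then 1 else 0) + S y) := by
  set M := univ.sup S
  set T : Finset α := {y | S y = M}
  have hS : ∀ y, S y ≤ M := fun y => le_sup (mem_univ y)
  have upper : ∀ a, univ.sup (fun y => (if c y = a then 1 else 0) + S y)
      ≤ (if a ∈ T.image c then 1 else 0) + M := by
    refine fun a => Finset.sup_le fun y _ => ?_
    by_cases hya : c y = a
    · by_cases hyT : y ∈ T
      · have : a ∈ T.image c := mem_image.mpr ⟨y, hyT, hya⟩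
        simp [hya, this, (mem_filter.mp hyT).2]
      · have : S y < M := (hS y).lt_of_ne (by simpa [T] using hyT)
        simp only [hya, if_true]
        split_ifs <;> omega
    · simp only [hya, if_false]
      have := hS y
      split_ifs <;> omega
  have lower : ∀ a, (if a ∈ T then 1 else 0) + M
      ≤ univ.sup (fun y => (if y = a then 1 else 0) + S y) := by
    intro a
    split_ifs with haT
    · have : S a = M := by simpa [T] using haT
      calc 1 + M = (if a = a then 1 else 0) + S a := by simp [this, add_comm]
        _ ≤ _ := le_sup (f := fun y => (if y = a then 1 else 0) + S y) (mem_univ a)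
    · exact (zero_add M).le.trans (sup_mono_fun fun y _ => Nat.le_add_left _ _)
  calc ∑ a, univ.sup (fun y => (if c y = a then 1 else 0) + S y)
      ≤ ∑ a, ((if a ∈ T.image c then 1 else 0) + M) := sum_le_sum fun a _ => upper a
    _ ≤ ∑ a, ((if a ∈ T then 1 else 0) + M) := by
      simp only [sum_add_distrib, sum_boole, filter_mem_eq_inter, univ_inter]
      exact Nat.add_le_add_right card_image_le _
    _ ≤ _ := sum_le_sum fun a _ => lower a

lemma sim_eq_ite_add_sum {n d : ℕ} (j₀ : Fin n) (z x : Fin n → Fin d) :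
    Sim n d z x = (if z j₀ = x j₀ then 1 else 0)
      + ∑ j : {j : Fin n // j ≠ j₀}, if z j = x j then 1 else 0 := by
  rw [Sim, card_filter, ← add_sum_erase _ _ (mem_univ j₀)]
  congr 1
  exact sum_subtype _ (by simp) _

lemma sum_maxSim_le_sum_maxSim_update {n d : ℕ} (f : Fin d → Fin n → Fin d) (j₀ : Fin n) :
    ∑ x, maxSim n d f x ≤ ∑ x, maxSim n d (fun y => Function.update (f y) j₀ y) x := by
  let e := Equiv.funSplitAt j₀ (Fin d)
  rw [← e.symm.sum_comp, ← e.symm.sum_comp, Fintype.sum_prod_type_right,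
    Fintype.sum_prod_type_right]
  refine sum_le_sum fun x' _ => ?_
  have hsim : ∀ z a, Sim n d z (e.symm (a, x')) = (if z j₀ = a then 1 else 0)
      + ∑ j : {j : Fin n // j ≠ j₀}, if z j = x' j then 1 else 0 := by
    intro z a
    rw [sim_eq_ite_add_sum j₀]
    congr 1
    · simp [e, Equiv.funSplitAt_symm_apply]
    · exact sum_congr rfl fun j _ => by simp [e, Equiv.funSplitAt_symm_apply, j.2]
  have hupdate : ∀ y (j : {j : Fin n // j ≠ j₀}), Function.update (f y) j₀ y j = f y j :=
    fun y j => Function.update_of_ne j.2 _ _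
  simp only [maxSim, hsim, Function.update_self, hupdate]
  exact sum_sup_ite_le_sum_sup_ite _ _

lemma sum_maxSim_le_sum_maxSim_piecewise {n d : ℕ} (f : Fin d → Fin n → Fin d)
    (s : Finset (Fin n)) :
    ∑ x, maxSim n d f x ≤ ∑ x, maxSim n d (fun y => s.piecewise (fun _ => y) (f y)) x := by
  induction s using Finset.induction_on with
  | empty => simp
  | insert j s _ ih =>
    simpa [piecewise_insert] using
      ih.trans (sum_maxSim_le_sum_maxSim_update (fun y => s.piecewise (fun _ => y) (f y)) j)

lemma isOptimal_const (n d : ℕ) : IsOptimal n d fun y _ => y := by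
  intro f
  have hsum : ∑ x, maxSim n d f x ≤ ∑ x, maxSim n d (fun y _ => y) x := by
    simpa using sum_maxSim_le_sum_maxSim_piecewise f univ
  exact div_le_div_of_nonneg_right (by exact_mod_cast hsum) (by positivity)

theorem stmt_4_general (n d : ℕ)
    (f : Fin d → Fin n → Fin d) :
    ∃ g : Fin d → Fin n → Fin d, Property1 n d g ∧ Value n d f ≤ Value n d g :=
  ⟨fun y _ => y, fun _ _ _ h => h, isOptimal_const n d f⟩

/-- every strategy is dominated by some strategy satisfying
Property 1. -/
theorem stmt_4 (n d : ℕ) (hn : 1 ≤ n) (hd : 2 ≤ d)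
    (f : Fin d → Fin n → Fin d) :
    ∃ g : Fin d → Fin n → Fin d, Property1 n d g ∧ Value n d f ≤ Value n d g :=
  stmt_4_general n d f
end

section
/- All strategies satisfying Property 1 have the same value: if g satisfies Property 1 (for every index j : Fin n the map y ↦ g y j is injective), then Value(g) = Value(g_maj), where g_maj is the majority strategy defined by g_maj y j = y. -/
open Finset

/-!
Relabelling the alphabet by a permutation `e j` in every position `j`, simultaneously in the
decoding matrix and in the words, preserves all similarities, hence every `maxSim`; since the
relabelling permutes the set of words, it preserves the value. A strategy with Property 1 is the
majority strategy relabelled by its (bijective) columns.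
-/

section Relabel

variable {n d : ℕ} (e : Fin n → Fin d ≃ Fin d)

theorem sim_relabel (z x : Fin n → Fin d) :
    Sim n d (fun j => e j (z j)) (fun j => e j (x j)) = Sim n d z x := by
  simp only [Sim, EmbeddingLike.apply_eq_iff_eq]

theorem maxSim_relabel (g : Fin d → Fin n → Fin d) (x : Fin n → Fin d) :
    maxSim n d (fun y j => e j (g y j)) (fun j => e j (x j)) = maxSim n d g x := by
  simp only [maxSim, sim_relabel]

theorem value_relabel (g : Fin d → Fin n → Fin d) :
    Value n d (fun y j => e j (g y j)) = Value n d g := by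
  unfold Value
  congr 1
  exact (Fintype.sum_equiv (Equiv.piCongrRight e) _ _ fun x =>
    congrArg Nat.cast (maxSim_relabel e g x).symm).symm

end Relabel

theorem stmt_5_general (n d : ℕ)
    (g : Fin d → Fin n → Fin d) (hp : Property1 n d g) :
    Value n d g = Value n d (fun y _ => y) := by
  let column : Fin n → Fin d ≃ Fin d := fun j =>
    Equiv.ofBijective _ (Finite.injective_iff_bijective.mp (hp j))
  exact value_relabel column fun y _ => y

/-- Lemma 2: all strategies satisfying Property 1 have the same
value, namely the value of the majority strategy `g_maj y j = y`. -/
theorem stmt_5 (n d : ℕ) (hn : 1 ≤ n) (hd : 2 ≤ d)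
    (g : Fin d → Fin n → Fin d) (hp : Property1 n d g) :
    Value n d g = Value n d (fun y _ => y) :=
  stmt_5_general n d g hp
end

section
/- Let n = 2 and d ≥ 2, and let g be a strategy satisfying Property 2. Then exactly d words x : Fin 2 → Fin d satisfy max over y of Sim(g y, x) = 2, and the remaining d² − d words satisfy max over y of Sim(g y, x) = 1. -/
open Finset

/-! A column `y ↦ g y j` that is injective is a bijection of `Fin d`, so every word `x` is matched
at position `j` by some row, giving `maxSim ≥ 1`; it also makes `g` injective, so exactly the `d`
rows themselves are matched everywhere. For `n = 2` this leaves only the values `1` and `2`. -/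

theorem Sim_le {n d : ℕ} (z x : Fin n → Fin d) : Sim n d z x ≤ n := by
  simpa [Sim] using card_filter_le univ fun j => z j = x j

theorem Sim_eq_iff {n d : ℕ} {z x : Fin n → Fin d} : Sim n d z x = n ↔ z = x := by
  simpa [Sim, funext_iff] using card_filter_eq_iff (s := univ) (p := fun j => z j = x j)

section maxSim

variable {n d : ℕ} {g : Fin d → Fin n → Fin d}

theorem le_maxSim (y : Fin d) (x : Fin n → Fin d) : Sim n d (g y) x ≤ maxSim n d g x :=
  le_sup (f := fun y => Sim n d (g y) x) (mem_univ y)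

theorem maxSim_le (x : Fin n → Fin d) : maxSim n d g x ≤ n :=
  Finset.sup_le fun y _ => Sim_le (g y) x

theorem maxSim_eq_iff_mem_range (hn : n ≠ 0) {x : Fin n → Fin d} :
    maxSim n d g x = n ↔ x ∈ Set.range g := by
  constructor
  · intro h
    have : Nonempty (Fin d) := ⟨x ⟨0, Nat.pos_of_ne_zero hn⟩⟩
    obtain ⟨y, -, hy⟩ := exists_mem_eq_sup univ univ_nonempty fun y => Sim n d (g y) x
    exact ⟨y, Sim_eq_iff.1 (hy ▸ h)⟩
  · rintro ⟨y, rfl⟩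
    have := le_maxSim (g := g) y (g y)
    rw [Sim_eq_iff.2 rfl] at this
    exact (maxSim_le _).antisymm this

theorem card_filter_maxSim_eq (hn : n ≠ 0) (hg : Function.Injective g) :
    #(univ.filter fun x => maxSim n d g x = n) = d := by
  have : (univ.filter fun x => maxSim n d g x = n) = univ.image g := by
    ext x
    simp [maxSim_eq_iff_mem_range hn]
  rw [this, card_image_of_injective _ hg, card_univ, Fintype.card_fin]

theorem one_le_maxSim {j : Fin n} (hj : Function.Injective fun y => g y j)
    (x : Fin n → Fin d) : 1 ≤ maxSim n d g x := by
  obtain ⟨y, hy⟩ := Finite.surjective_of_injective hj (x j)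
  have : 1 ≤ Sim n d (g y) x := card_pos.2 ⟨j, by simpa using hy⟩
  exact this.trans (le_maxSim y x)

end maxSim

theorem Property2.exists_injective_column {n d : ℕ} {g : Fin d → Fin n → Fin d} (hg : Property2 n d g)
    (hn : 1 < n) : ∃ j, Function.Injective fun y => g y j := by
  by_contra! h
  have := hg ⟨0, by omega⟩ ⟨1, hn⟩ (h _) (h _)
  simp [Fin.ext_iff] at this

theorem stmt_9_general (d : ℕ)
    (g : Fin d → Fin 2 → Fin d) (hp : Property2 2 d g) :
    (Finset.univ.filter fun x : Fin 2 → Fin d => maxSim 2 d g x = 2).card = d ∧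
    (Finset.univ.filter fun x : Fin 2 → Fin d => maxSim 2 d g x = 1).card
      = d ^ 2 - d := by
  obtain ⟨j, hj⟩ := hp.exists_injective_column one_lt_two
  have hcard₂ := card_filter_maxSim_eq two_ne_zero fun a b hab => hj (congrFun hab j)
  refine ⟨hcard₂, ?_⟩
  have hcompl : (univ.filter fun x : Fin 2 → Fin d => maxSim 2 d g x = 1) =
      univ \ univ.filter fun x => maxSim 2 d g x = 2 := by
    ext x
    have := one_le_maxSim hj x
    have := maxSim_le (g := g) x
    simp only [mem_filter, mem_sdiff, mem_univ, true_and]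
    omega
  rw [hcompl, card_sdiff_of_subset (filter_subset _ _), hcard₂, card_univ, Fintype.card_fun,
    Fintype.card_fin, Fintype.card_fin]

/-- for `n = 2`, a strategy with Property 2 approximates exactly
`d` words perfectly (similarity 2) and the remaining `d² - d` words with
similarity 1. -/
theorem stmt_9 (d : ℕ) (hd : 2 ≤ d)
    (g : Fin d → Fin 2 → Fin d) (hp : Property2 2 d g) :
    (Finset.univ.filter fun x : Fin 2 → Fin d => maxSim 2 d g x = 2).card = d ∧
    (Finset.univ.filter fun x : Fin 2 → Fin d => maxSim 2 d g x = 1).card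
      = d ^ 2 - d :=
  stmt_9_general d g hp
end

section
/- Let d = 2 and n ≥ 1. Then the majority strategy g_maj (over the binary alphabet Fin 2) has value Value(g_maj) = 2^{-n} · Σ_{k=0}^{n} binom(n, k) · max(k, n − k) / n. -/
open Finset

/-!
The rows of the majority strategy are the two constant words, so a binary word with `k` zeros is
approximated with similarity `max k (n - k)`. Identifying a word with its set of zeros, there are
`n.choose k` words with `k` zeros, which turns the sum over all `2 ^ n` words into the binomial sum.
-/

section ZeroSet

variable (ι : Type*) [Fintype ι] [DecidableEq ι]

def zeroSetEquiv : (ι → Fin 2) ≃ Finset ι where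
  toFun x := {j | x j = 0}
  invFun s j := if j ∈ s then 0 else 1
  left_inv x := by
    funext j
    rcases Fin.exists_fin_two.mp ⟨x j, rfl⟩ with h | h <;> simp [h]
  right_inv s := by
    ext j
    by_cases h : j ∈ s <;> simp [h]

theorem sum_fin_two_apply_card_zeros {M : Type*} [AddCommMonoid M] (f : ℕ → M) :
    ∑ x : ι → Fin 2, f #{j | x j = 0} =
      ∑ k ∈ range (Fintype.card ι + 1), (Fintype.card ι).choose k • f k := by
  refine ((zeroSetEquiv ι).sum_comp fun s => f #s).trans ?_
  rw [← powerset_univ, sum_powerset_apply_card, card_univ]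

end ZeroSet

theorem sim_const (n d : ℕ) (y : Fin d) (x : Fin n → Fin d) :
    Sim n d (fun _ => y) x = #{j | x j = y} := by
  simp only [Sim, eq_comm]

theorem card_ones_eq_sub_card_zeros (n : ℕ) (x : Fin n → Fin 2) :
    #{j | x j = 1} = n - #{j | x j = 0} := by
  have hsplit := card_filter_add_card_filter_not (s := univ) (fun j => x j = 0)
  have eq_one_iff_ne_zero : ∀ a : Fin 2, a = 1 ↔ a ≠ 0 := by decide
  simp only [← eq_one_iff_ne_zero, card_univ, Fintype.card_fin] at hsplit
  omega

theorem maxSim_majority_fin_two (n : ℕ) (x : Fin n → Fin 2) :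
    maxSim n 2 (fun y _ => y) x = max #{j | x j = 0} (n - #{j | x j = 0}) := by
  rw [maxSim, univ_fin2, sup_insert, sup_singleton, sim_const, sim_const,
    card_ones_eq_sub_card_zeros]

theorem sum_maxSim_majority_fin_two (n : ℕ) :
    ∑ x : Fin n → Fin 2, (maxSim n 2 (fun y _ => y) x : ℚ) =
      ∑ k ∈ range (n + 1), (n.choose k : ℚ) * ((max k (n - k) : ℕ) : ℚ) := by
  simp only [maxSim_majority_fin_two]
  simpa [nsmul_eq_mul] using
    sum_fin_two_apply_card_zeros (Fin n) fun k => ((max k (n - k) : ℕ) : ℚ)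

theorem stmt_11_general (n : ℕ) :
    Value n 2 (fun y _ => y) =
      (2 : ℚ) ^ (-(n : ℤ)) *
        ∑ k ∈ Finset.range (n + 1),
          (n.choose k : ℚ) * ((max k (n - k) : ℕ) : ℚ) / (n : ℚ) := by
  rw [Value, sum_maxSim_majority_fin_two, ← sum_div, zpow_neg, zpow_natCast, inv_mul_eq_div,
    div_mul_eq_div_div, Nat.cast_ofNat]

/-- for the binary alphabet `d = 2`, the value of the majority
strategy equals `2^{-n} · Σ_{k=0}^{n} C(n,k) · max(k, n-k) / n`. -/
theorem stmt_11 (n : ℕ) (hn : 1 ≤ n) :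
    Value n 2 (fun y _ => y) =
      (2 : ℚ) ^ (-(n : ℤ)) *
        ∑ k ∈ Finset.range (n + 1),
          (n.choose k : ℚ) * ((max k (n - k) : ℕ) : ℚ) / (n : ℚ) :=
  stmt_11_general n
end

section
/- Let d = 2 and let n ≥ 2 be even, and let g be a strategy (over the binary alphabet Fin 2) satisfying Property 1. Then for each k with 0 ≤ k < n/2, the number of words x : Fin n → Fin 2 with max over y of Sim(g y, x) = n − k is exactly 2·binom(n, k), and the number of words x with max over y of Sim(g y, x) = n/2 is exactly binom(n, n/2). -/
open Finset

/-! A binary word `x` is determined by `z` and the set of positions where it agrees with `z`,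
so exactly `C(n, k)` words have similarity `k` with `z`. Property 1 forces the two rows of a
binary strategy to be complementary, hence `maxSim g x = max s (n - s)` with `s = Sim (g 0) x`,
and for `2k ≤ n` the words with `maxSim g x = n - k` are those with `s = k` or `s = n - k`. -/

theorem card_filter_sim_eq (n : ℕ) (z : Fin n → Fin 2) (k : ℕ) :
    (univ.filter fun x : Fin n → Fin 2 => Sim n 2 z x = k).card = n.choose k := by
  have flip_of_ne : ∀ a b : Fin 2, a ≠ b → b = a + 1 := by decide
  have ne_add_one : ∀ a : Fin 2, a ≠ a + 1 := by decide
  conv_rhs => rw [← card_fin n, ← card_powersetCard]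
  refine card_nbij' (fun x => univ.filter fun j => z j = x j)
    (fun s j => if j ∈ s then z j else z j + 1) ?_ ?_ ?_ ?_
  · intro x hx
    simp only [mem_coe, mem_filter, mem_univ, true_and, mem_powersetCard, subset_univ] at hx ⊢
    exact hx
  · intro s hs
    rw [mem_coe, mem_powersetCard] at hs
    have : (univ.filter fun j => z j = if j ∈ s then z j else z j + 1) = s := by
      ext j
      by_cases hj : j ∈ s <;> simp [hj, ne_add_one]
    rw [mem_coe, mem_filter, Sim, this]
    exact ⟨mem_univ _, hs.2⟩
  · intro x _
    funext j
    by_cases hj : z j = x j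
    · simp [hj]
    · simpa [hj] using (flip_of_ne _ _ hj).symm
  · intro s _
    ext j
    by_cases hj : j ∈ s <;> simp [hj, ne_add_one]

theorem sim_le (n d : ℕ) (z x : Fin n → Fin d) : Sim n d z x ≤ n :=
  (card_filter_le _ _).trans (card_fin n).le

theorem sim_eq_sub_of_forall_ne (n : ℕ) {z w : Fin n → Fin 2} (h : ∀ j, z j ≠ w j)
    (x : Fin n → Fin 2) : Sim n 2 w x = n - Sim n 2 z x := by
  have eq_iff_ne : ∀ a b c : Fin 2, a ≠ b → (b = c ↔ a ≠ c) := by decide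
  have : (univ.filter fun j => w j = x j) = univ.filter fun j => ¬z j = x j := by
    ext j
    simp [eq_iff_ne _ _ _ (h j)]
  rw [Sim, this, filter_not, card_sdiff_of_subset (filter_subset _ _), card_univ,
    Fintype.card_fin, Sim]

theorem maxSim_two (n : ℕ) (g : Fin 2 → Fin n → Fin 2) (x : Fin n → Fin 2) :
    maxSim n 2 g x = max (Sim n 2 (g 0) x) (Sim n 2 (g 1) x) := by
  rw [maxSim, show (univ : Finset (Fin 2)) = {0, 1} by decide, sup_insert, sup_singleton]

theorem Property1.maxSim_two_eq {n : ℕ} {g : Fin 2 → Fin n → Fin 2} (hp : Property1 n 2 g)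
    (x : Fin n → Fin 2) :
    maxSim n 2 g x = max (Sim n 2 (g 0) x) (n - Sim n 2 (g 0) x) := by
  rw [maxSim_two, sim_eq_sub_of_forall_ne n (fun j => (hp j).ne zero_ne_one)]

theorem Property1.filter_maxSim_two_eq_sub {n k : ℕ} {g : Fin 2 → Fin n → Fin 2}
    (hp : Property1 n 2 g) (hk : 2 * k ≤ n) :
    (univ.filter fun x : Fin n → Fin 2 => maxSim n 2 g x = n - k)
      = (univ.filter fun x => Sim n 2 (g 0) x = k)
        ∪ univ.filter fun x => Sim n 2 (g 0) x = n - k := by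
  rw [← filter_or]
  refine filter_congr fun x _ => ?_
  rw [hp.maxSim_two_eq]
  have hle := sim_le n 2 (g 0) x
  rw [max_def]
  split_ifs <;> omega

theorem stmt_12_general (n : ℕ) (hne : Even n)
    (g : Fin 2 → Fin n → Fin 2) (hp : Property1 n 2 g) :
    (∀ k : ℕ, k < n / 2 →
      (Finset.univ.filter fun x : Fin n → Fin 2 => maxSim n 2 g x = n - k).card
        = 2 * n.choose k) ∧
    (Finset.univ.filter fun x : Fin n → Fin 2 => maxSim n 2 g x = n / 2).card
      = n.choose (n / 2) := by
  constructor
  · intro k hk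
    have hdisj : Disjoint (univ.filter fun x => Sim n 2 (g 0) x = k)
        (univ.filter fun x => Sim n 2 (g 0) x = n - k) :=
      disjoint_filter.mpr fun _ _ h => by omega
    rw [hp.filter_maxSim_two_eq_sub (by omega), card_union_of_disjoint hdisj,
      card_filter_sim_eq, card_filter_sim_eq, Nat.choose_symm (by omega), two_mul]
  · have half : n - n / 2 = n / 2 := by
      obtain ⟨m, rfl⟩ := hne
      omega
    have := hp.filter_maxSim_two_eq_sub (k := n / 2) (Nat.mul_div_le n 2)
    rw [half, union_self] at this
    rw [this, card_filter_sim_eq]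

/-- for `d = 2` and even `n ≥ 2`, a strategy with Property 1
`(n-k)`-approximates exactly `2·C(n,k)` words for each `0 ≤ k < n/2`, and
`(n/2)`-approximates exactly `C(n, n/2)` words. -/
theorem stmt_12 (n : ℕ) (hn : 2 ≤ n) (hne : Even n)
    (g : Fin 2 → Fin n → Fin 2) (hp : Property1 n 2 g) :
    (∀ k : ℕ, k < n / 2 →
      (Finset.univ.filter fun x : Fin n → Fin 2 => maxSim n 2 g x = n - k).card
        = 2 * n.choose k) ∧
    (Finset.univ.filter fun x : Fin n → Fin 2 => maxSim n 2 g x = n / 2).card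
      = n.choose (n / 2) :=
  stmt_12_general n hne g hp
end

section
/- Let n = 2 and d ≥ 2, and let f be a strategy that does not satisfy Property 2 (i.e., both maps y ↦ f y 0 and y ↦ f y 1 fail to be injective, equivalently neither column of f is surjective onto Fin d). Then there exists a word x : Fin 2 → Fin d such that Sim(f y, x) = 0 for every y : Fin d. -/
/-
Property 2 failing for n = 2 means both columns `y ↦ f y j` are non-injective self-maps of the
finite set `Fin d`, hence non-surjective. Choosing for each position `j` a letter `x j` missed by
column `j` gives a word that agrees with no row in any position.
-/

open Finset

theorem sim_eq_zero_iff {n d : ℕ} {z x : Fin n → Fin d} :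
    Sim n d z x = 0 ↔ ∀ j, z j ≠ x j := by
  simp [Sim, Finset.filter_eq_empty_iff]

theorem exists_forall_ne_of_not_injective {α : Type*} [Finite α] {g : α → α}
    (hg : ¬ Function.Injective g) : ∃ a, ∀ y, g y ≠ a := by
  simpa [Function.Surjective] using mt Finite.injective_iff_surjective.mpr hg

theorem exists_forall_sim_eq_zero_of_forall_not_injective {n d : ℕ}
    {g : Fin d → Fin n → Fin d} (hg : ∀ j, ¬ Function.Injective fun y => g y j) :
    ∃ x : Fin n → Fin d, ∀ y, Sim n d (g y) x = 0 := by
  choose x hx using fun j => exists_forall_ne_of_not_injective (hg j)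
  exact ⟨x, fun y => sim_eq_zero_iff.mpr fun j => hx j y⟩

theorem forall_not_injective_of_not_property2_two {d : ℕ} {g : Fin d → Fin 2 → Fin d}
    (hg : ¬ Property2 2 d g) : ∀ j, ¬ Function.Injective fun y => g y j := by
  simp only [Property2, not_forall] at hg
  obtain ⟨j₁, j₂, h₁, h₂, hne⟩ := hg
  intro j
  obtain rfl | rfl : j = j₁ ∨ j = j₂ := by omega
  exacts [h₁, h₂]

theorem stmt_13_general (d : ℕ)
    (f : Fin d → Fin 2 → Fin d) (hp : ¬ Property2 2 d f) :
    ∃ x : Fin 2 → Fin d, ∀ y : Fin d, Sim 2 d (f y) x = 0 :=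
  exists_forall_sim_eq_zero_of_forall_not_injective (forall_not_injective_of_not_property2_two hp)

/-- for `n = 2`, if a strategy fails Property 2 (both columns
fail to be injective), then some word has similarity 0 with every row. -/
theorem stmt_13 (d : ℕ) (hd : 2 ≤ d)
    (f : Fin d → Fin 2 → Fin d) (hp : ¬ Property2 2 d f) :
    ∃ x : Fin 2 → Fin d, ∀ y : Fin d, Sim 2 d (f y) x = 0 :=
  stmt_13_general d f hp
end
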